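/- arXiv:2401.15491 — 3 statements merged into one kernel-verified Lean document; each statement's English description precedes it below -/
import Mathlib

section
/- Let P, Q be probability measures on (T, F) with d_Mult(P, Q) ≤ ε, and let ν be a σ-finite measure dominating P with density p = dP/dν. Then Q is absolutely continuous with respect to ν and admits a density q with e^{−ε} p(t) ≤ q(t) ≤ e^{ε} p(t) for ν-almost every t. -/
/-!
A set-wise bound `|ln (P S / Q S)| ≤ ε` says exactly that `e^{-ε} P ≤ Q ≤ e^{ε} P` as measures.
The upper bound gives `Q ≪ P ≪ ν`, so `Q` has the density `q = dQ/dν`, and comparing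
`ν.withDensity q` with `ν.withDensity (e^{±ε} p)` on every measurable set transfers both bounds
to the densities, ν-almost everywhere (this is where σ-finiteness of `ν` enters).
-/

open MeasureTheory ENNReal

/-- `|ln(a/b)|` as an extended nonnegative real, with the conventions
`0/0 = ∞/∞ = 1` (so the value is `0` in those cases). -/
noncomputable def logRatio (a b : ℝ≥0∞) : ℝ≥0∞ :=
  if (a = 0 ∧ b = 0) ∨ (a = ⊤ ∧ b = ⊤) then 0
  else if a = 0 ∨ b = 0 ∨ a = ⊤ ∨ b = ⊤ then ⊤
  else ENNReal.ofReal |Real.log (a.toReal / b.toReal)|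

/-- The multiplicative distance `d_Mult(μ,ν) = sup_{S ∈ F} |ln(μ(S)/ν(S))|`. -/
noncomputable def dMult {T : Type*} [MeasurableSpace T] (μ ν : Measure T) : ℝ≥0∞ :=
  ⨆ (S : Set T) (_ : MeasurableSet S), logRatio (μ S) (ν S)

open Real

theorem bounds_of_logRatio_le {a b : ℝ≥0∞} {ε : ℝ} (hε : 0 ≤ ε) (ha : a ≠ ∞) (hb : b ≠ ∞)
    (h : logRatio a b ≤ ENNReal.ofReal ε) :
    ENNReal.ofReal (exp (-ε)) * a ≤ b ∧ b ≤ ENNReal.ofReal (exp ε) * a := by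
  unfold logRatio at h
  split_ifs at h with hdeg hzero
  · obtain ⟨rfl, rfl⟩ | ⟨rfl, -⟩ := hdeg
    · simp
    · exact absurd rfl ha
  · exact absurd h (by simp)
  · simp only [not_or] at hzero
    have hx : 0 < a.toReal := ENNReal.toReal_pos hzero.1 ha
    have hy : 0 < b.toReal := ENNReal.toReal_pos hzero.2.1 hb
    rw [ENNReal.ofReal_le_ofReal_iff hε, abs_le, Real.log_div hx.ne' hy.ne'] at h
    rw [← ENNReal.ofReal_toReal ha, ← ENNReal.ofReal_toReal hb,
      ← ENNReal.ofReal_mul (exp_pos _).le, ← ENNReal.ofReal_mul (exp_pos _).le]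
    constructor <;> apply ENNReal.ofReal_le_ofReal
    · calc exp (-ε) * a.toReal = exp (-ε + log a.toReal) := by rw [exp_add, exp_log hx]
        _ ≤ exp (log b.toReal) := exp_le_exp.mpr (by linarith)
        _ = b.toReal := exp_log hy
    · calc b.toReal = exp (log b.toReal) := (exp_log hy).symm
        _ ≤ exp (ε + log a.toReal) := exp_le_exp.mpr (by linarith)
        _ = exp ε * a.toReal := by rw [exp_add, exp_log hx]

section Measures

variable {T : Type*} [MeasurableSpace T]

theorem logRatio_le_dMult (μ ν : Measure T) {S : Set T} (hS : MeasurableSet S) :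
    logRatio (μ S) (ν S) ≤ dMult μ ν :=
  le_iSup₂ (f := fun S (_ : MeasurableSet S) => logRatio (μ S) (ν S)) S hS

theorem smul_le_and_le_smul_of_dMult_le {μ ν : Measure T} [IsFiniteMeasure μ]
    [IsFiniteMeasure ν] {ε : ℝ} (hε : 0 ≤ ε) (h : dMult μ ν ≤ ENNReal.ofReal ε) :
    ENNReal.ofReal (exp (-ε)) • μ ≤ ν ∧ ν ≤ ENNReal.ofReal (exp ε) • μ := by
  have bounds (S : Set T) (hS : MeasurableSet S) :=
    bounds_of_logRatio_le hε (measure_ne_top μ S) (measure_ne_top ν S)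
      ((logRatio_le_dMult μ ν hS).trans h)
  exact ⟨Measure.le_iff.2 fun S hS => (bounds S hS).1, Measure.le_iff.2 fun S hS => (bounds S hS).2⟩

theorem ae_le_of_withDensity_le {μ : Measure T} [SigmaFinite μ] {f g : T → ℝ≥0∞}
    (hf : Measurable f) (h : μ.withDensity f ≤ μ.withDensity g) : f ≤ᵐ[μ] g :=
  ae_le_of_forall_setLIntegral_le_of_sigmaFinite hf fun s hs _ => by
    simpa only [withDensity_apply _ hs] using h s

end Measures

/-- If `d_Mult(P,Q) ≤ ε` and `ν` is a σ-finite dominating measure for `P` with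
density `p`, then `Q ≪ ν` and `Q` has a density `q` with
`e^{-ε} p ≤ q ≤ e^{ε} p` ν-almost everywhere. -/
theorem stmt6 {T : Type*} [MeasurableSpace T] (P Q : Measure T)
    [IsProbabilityMeasure P] [IsProbabilityMeasure Q]
    (ν : Measure T) [SigmaFinite ν] (ε : ℝ) (hε : 0 ≤ ε)
    (h : dMult P Q ≤ ENNReal.ofReal ε)
    (p : T → ℝ≥0∞) (hpm : Measurable p) (hp : P = ν.withDensity p) :
    Q ≪ ν ∧ ∃ q : T → ℝ≥0∞, Measurable q ∧ Q = ν.withDensity q ∧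
      ∀ᵐ t ∂ν, ENNReal.ofReal (Real.exp (-ε)) * p t ≤ q t ∧
        q t ≤ ENNReal.ofReal (Real.exp ε) * p t := by
  obtain ⟨hlower, hupper⟩ := smul_le_and_le_smul_of_dMult_le hε h
  have hQν : Q ≪ ν :=
    (Measure.absolutelyContinuous_of_le_smul hupper).trans
      (hp ▸ withDensity_absolutelyContinuous ν p)
  have hQ : Q = ν.withDensity (Q.rnDeriv ν) := (Measure.withDensity_rnDeriv_eq _ _ hQν).symm
  refine ⟨hQν, Q.rnDeriv ν, Q.measurable_rnDeriv ν, hQ, ?_⟩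
  rw [hp, ← withDensity_smul _ hpm, hQ] at hlower hupper
  filter_upwards [ae_le_of_withDensity_le (hpm.const_smul _) hlower,
    ae_le_of_withDensity_le (Q.measurable_rnDeriv ν) hupper] with t hlo hup
  exact ⟨hlo, hup⟩
end

section
/- Bayes odds-ratio characterization: for a fixed attacker prior with P(E), P(E') > 0 and a mechanism with conditional laws P(t ∈ ·|E), P(t ∈ ·|E') on (T, F), the condition e^{−ε} P(t ∈ S|E') ≤ P(t ∈ S|E) ≤ e^{ε} P(t ∈ S|E') for all S ∈ F holds if and only if the posterior odds satisfy e^{−ε} ≤ [P(E|t)/P(E'|t)] / [P(E)/P(E')] ≤ e^{ε} for (marginal-)almost all t, where posteriors are given by Bayes' rule via densities with respect to the marginal. -/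
open MeasureTheory

/-! Both conditional laws are absolutely continuous with respect to the finite mixture `m`, so
`μ S = ∫⁻ t in S, dμ/dm t ∂m`. A setwise inequality between such integrals, over all measurable
`S`, is equivalent to the `m`-a.e. inequality of the integrands. -/

namespace MeasureTheory

variable {α : Type*} [MeasurableSpace α] {m μ ν : Measure α}

theorem forall_setLIntegral_le_iff_ae_le [SigmaFinite m] {f g : α → ENNReal}
    (hf : Measurable f) :
    (∀ s, MeasurableSet s → ∫⁻ x in s, f x ∂m ≤ ∫⁻ x in s, g x ∂m) ↔ f ≤ᵐ[m] g :=
  ⟨fun h => ae_le_of_forall_setLIntegral_le_of_sigmaFinite hf fun s hs _ => h s hs,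
    fun h _ _ => lintegral_mono_ae (ae_restrict_of_ae h)⟩

theorem setLIntegral_const_mul_rnDeriv [SFinite m] [μ.HaveLebesgueDecomposition m]
    (hμ : μ ≪ m) (c : ENNReal) (s : Set α) :
    ∫⁻ x in s, c * μ.rnDeriv m x ∂m = c * μ s := by
  rw [lintegral_const_mul _ (μ.measurable_rnDeriv m), Measure.setLIntegral_rnDeriv hμ]

variable [SigmaFinite m] [μ.HaveLebesgueDecomposition m] [ν.HaveLebesgueDecomposition m]

theorem forall_const_mul_le_iff_ae_const_mul_rnDeriv_le (hμ : μ ≪ m) (hν : ν ≪ m)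
    (c : ENNReal) :
    (∀ s, MeasurableSet s → c * ν s ≤ μ s) ↔
      ∀ᵐ x ∂m, c * ν.rnDeriv m x ≤ μ.rnDeriv m x := by
  simp only [← setLIntegral_const_mul_rnDeriv hν, ← Measure.setLIntegral_rnDeriv hμ]
  exact forall_setLIntegral_le_iff_ae_le ((ν.measurable_rnDeriv m).const_mul c)

theorem forall_le_const_mul_iff_ae_rnDeriv_le_const_mul (hμ : μ ≪ m) (hν : ν ≪ m)
    (c : ENNReal) :
    (∀ s, MeasurableSet s → μ s ≤ c * ν s) ↔
      ∀ᵐ x ∂m, μ.rnDeriv m x ≤ c * ν.rnDeriv m x := by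
  simp only [← setLIntegral_const_mul_rnDeriv hν, ← Measure.setLIntegral_rnDeriv hμ]
  exact forall_setLIntegral_le_iff_ae_le (μ.measurable_rnDeriv m)

end MeasureTheory

theorem stmt14_general {T : Type*} [MeasurableSpace T] (μE μE' : Measure T)
    [IsProbabilityMeasure μE] [IsProbabilityMeasure μE']
    (wE wE' : ℝ) (hwE0 : 0 < wE) (hwE'0 : 0 < wE')
    (ε : ℝ)
    (m : Measure T) (hm : m = ENNReal.ofReal wE • μE + ENNReal.ofReal wE' • μE') :
    (∀ S : Set T, MeasurableSet S →
        ENNReal.ofReal (Real.exp (-ε)) * μE' S ≤ μE S ∧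
          μE S ≤ ENNReal.ofReal (Real.exp ε) * μE' S) ↔
      (∀ᵐ t ∂m,
        ENNReal.ofReal (Real.exp (-ε)) * μE'.rnDeriv m t ≤ μE.rnDeriv m t ∧
          μE.rnDeriv m t ≤ ENNReal.ofReal (Real.exp ε) * μE'.rnDeriv m t) := by
  have hμE : μE ≪ m := hm ▸
    (Measure.absolutelyContinuous_smul (ENNReal.ofReal_pos.2 hwE0).ne').add_right _
  have hμE' : μE' ≪ m := hm ▸
    (Measure.absolutelyContinuous_smul (ENNReal.ofReal_pos.2 hwE'0).ne').add_right' _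
  have := μE.smul_finite ENNReal.ofReal_ne_top (c := ENNReal.ofReal wE)
  have := μE'.smul_finite ENNReal.ofReal_ne_top (c := ENNReal.ofReal wE')
  have : IsFiniteMeasure m := hm ▸ inferInstance
  simp only [forall_and, Filter.eventually_and,
    forall_const_mul_le_iff_ae_const_mul_rnDeriv_le hμE hμE',
    forall_le_const_mul_iff_ae_rnDeriv_le_const_mul hμE hμE']

/-- Bayes odds-ratio characterization: with prior weights `wE, wE' ∈ (0,1)` on
events `E, E'`, conditional laws `μE, μE'`, and marginal
`m = wE • μE + wE' • μE'`, the mechanism condition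
`e^{-ε} μE'(S) ≤ μE(S) ≤ e^ε μE'(S)` (for all measurable `S`) holds iff, for
`m`-almost all `t`, the posterior-to-prior odds ratio of `E` against `E'` lies in
`[e^{-ε}, e^ε]`; by Bayes' rule (the prior odds cancel) the latter is exactly
`e^{-ε} (dμE'/dm)(t) ≤ (dμE/dm)(t) ≤ e^ε (dμE'/dm)(t)`. -/
theorem stmt14 {T : Type*} [MeasurableSpace T] (μE μE' : Measure T)
    [IsProbabilityMeasure μE] [IsProbabilityMeasure μE']
    (wE wE' : ℝ) (hwE0 : 0 < wE) (hwE1 : wE < 1) (hwE'0 : 0 < wE') (hwE'1 : wE' < 1)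
    (ε : ℝ) (hε : 0 ≤ ε)
    (m : Measure T) (hm : m = ENNReal.ofReal wE • μE + ENNReal.ofReal wE' • μE') :
    (∀ S : Set T, MeasurableSet S →
        ENNReal.ofReal (Real.exp (-ε)) * μE' S ≤ μE S ∧
          μE S ≤ ENNReal.ofReal (Real.exp ε) * μE' S) ↔
      (∀ᵐ t ∂m,
        ENNReal.ofReal (Real.exp (-ε)) * μE'.rnDeriv m t ≤ μE.rnDeriv m t ∧
          μE.rnDeriv m t ≤ ENNReal.ofReal (Real.exp ε) * μE'.rnDeriv m t) :=
  stmt14_general μE μE' wE wE' hwE0 hwE'0 ε m hm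
end

section
/- Strong equivalence of multiplicative distance and density ratio metric: for probability measures P, Q on (T, F) that are mutually absolutely continuous with bounded density ratio, d_Mult(P, Q) ≤ δ(P, Q) ≤ 2 d_Mult(P, Q), where δ(P,Q) = esssup_{t,t'} ln[(f(t)/f(t'))·(g(t')/g(t))] for densities f, g of P, Q with respect to a dominating measure. -/
/-!
Both inequalities compare densities with the constant `K = exp D`. If
`f(t) g(t') ≤ K g(t) f(t')` for `τ ⊗ τ`-almost all pairs, integrating over `S × T` gives
`P(S) ≤ K Q(S)`, whence `d_Mult ≤ δ`. Conversely, `P(S) ≤ K Q(S)` for all `S` forces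
`f ≤ K g` `τ`-a.e., and multiplying this bound at `t` with the reverse one at `t'` bounds the
ratio in `δ` by `K²`, whence `δ ≤ 2 d_Mult`.
-/

open MeasureTheory ENNReal

/-- The density ratio metric `δ(P,Q) = esssup_{t,t'} |ln[(f(t)/f(t'))·(g(t')/g(t))]|`
(written via the single ratio `(f(t)g(t'))/(g(t)f(t'))`), where `f, g` are
densities of `P, Q` with respect to a dominating measure `τ`, and the essential
supremum is over pairs `(t,t')` with respect to `τ × τ`. -/
noncomputable def densityRatioMetric {T : Type*} [MeasurableSpace T]
    (f g : T → ℝ≥0∞) (τ : Measure T) : ℝ≥0∞ :=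
  essSup (fun p : T × T => logRatio (f p.1 * g p.2) (g p.1 * f p.2)) (τ.prod τ)

theorem Real.abs_log_div_le_iff {x y D : ℝ} (hx : 0 < x) (hy : 0 < y) :
    |Real.log (x / y)| ≤ D ↔ x ≤ Real.exp D * y ∧ y ≤ Real.exp D * x := by
  have log_sub_le : ∀ {a b : ℝ}, 0 < a → 0 < b →
      (Real.log a - Real.log b ≤ D ↔ a ≤ Real.exp D * b) := fun ha hb => by
      rw [sub_le_iff_le_add, ← Real.log_le_log_iff ha (mul_pos (Real.exp_pos D) hb),
        Real.log_mul (Real.exp_pos D).ne' hb.ne', Real.log_exp]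
  rw [Real.log_div hx.ne' hy.ne', abs_sub_le_iff, log_sub_le hx hy, log_sub_le hy hx]

theorem ENNReal.le_ofReal_mul_of_forall {x y : ℝ≥0∞} {c : ℝ} (hc : 0 < c)
    (h : ∀ D, 0 ≤ D → y ≤ ENNReal.ofReal D → x ≤ ENNReal.ofReal (c * D)) :
    x ≤ ENNReal.ofReal c * y := by
  rcases eq_or_ne y ⊤ with rfl | hy
  · rw [mul_top (ofReal_pos.2 hc).ne']
    exact le_top
  · simpa [ofReal_mul hc.le, ofReal_toReal hy] using h y.toReal toReal_nonneg (ofReal_toReal hy).ge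

theorem logRatio_le_ofReal_iff {a b : ℝ≥0∞} {D : ℝ} (hD : 0 ≤ D) :
    logRatio a b ≤ ENNReal.ofReal D ↔
      a ≤ ENNReal.ofReal (Real.exp D) * b ∧ b ≤ ENNReal.ofReal (Real.exp D) * a := by
  have hK : ENNReal.ofReal (Real.exp D) ≠ 0 := (ofReal_pos.2 (Real.exp_pos D)).ne'
  unfold logRatio
  split_ifs with h₀ h₁
  · rcases h₀ with ⟨rfl, rfl⟩ | ⟨rfl, rfl⟩ <;> simp [hK]
  · simp only [top_le_iff, ofReal_ne_top, false_iff, not_and_or, not_le]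
    rcases h₁ with rfl | rfl | rfl | rfl <;> simp_all [pos_iff_ne_zero] <;>
      exact mul_lt_top ofReal_lt_top (Ne.lt_top h₀)
  · simp only [not_or] at h₁
    obtain ⟨ha₀, hb₀, ha, hb⟩ := h₁
    rw [ofReal_le_ofReal_iff hD, Real.abs_log_div_le_iff (toReal_pos ha₀ ha) (toReal_pos hb₀ hb),
      ← toReal_le_toReal ha (mul_ne_top ofReal_ne_top hb),
      ← toReal_le_toReal hb (mul_ne_top ofReal_ne_top ha), toReal_mul, toReal_mul,
      toReal_ofReal (Real.exp_pos D).le]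

theorem dMult_le_ofReal_iff {T : Type*} [MeasurableSpace T] {μ ν : Measure T} {D : ℝ}
    (hD : 0 ≤ D) :
    dMult μ ν ≤ ENNReal.ofReal D ↔ ∀ S, MeasurableSet S →
      μ S ≤ ENNReal.ofReal (Real.exp D) * ν S ∧ ν S ≤ ENNReal.ofReal (Real.exp D) * μ S := by
  simp only [dMult, iSup₂_le_iff, logRatio_le_ofReal_iff hD]

theorem densityRatioMetric_le_ofReal_iff {T : Type*} [MeasurableSpace T] {f g : T → ℝ≥0∞}
    {τ : Measure T} {D : ℝ} (hD : 0 ≤ D) :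
    densityRatioMetric f g τ ≤ ENNReal.ofReal D ↔ ∀ᵐ p ∂τ.prod τ,
      f p.1 * g p.2 ≤ ENNReal.ofReal (Real.exp D) * (g p.1 * f p.2) ∧
        g p.1 * f p.2 ≤ ENNReal.ofReal (Real.exp D) * (f p.1 * g p.2) := by
  simp_rw [← logRatio_le_ofReal_iff hD]
  exact ⟨fun h => (ENNReal.ae_le_essSup _).mono fun _ hp => hp.trans h, essSup_le_of_ae_le _⟩

section withDensity

variable {T : Type*} [MeasurableSpace T] {τ : Measure T} {f g : T → ℝ≥0∞}

theorem withDensity_mul_withDensity_le_of_ae_prod_le [SFinite τ] (hf : Measurable f)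
    (hg : Measurable g) {K : ℝ≥0∞} (h : ∀ᵐ p ∂τ.prod τ, f p.1 * g p.2 ≤ K * (g p.1 * f p.2))
    {S : Set T} (hS : MeasurableSet S) :
    τ.withDensity f S * τ.withDensity g Set.univ ≤
      K * (τ.withDensity g S * τ.withDensity f Set.univ) := by
  have hS' : ∀ᵐ p ∂(τ.restrict S).prod τ, f p.1 * g p.2 ≤ K * (g p.1 * f p.2) :=
    h.filter_mono ((Measure.absolutelyContinuous_of_le Measure.restrict_le_self).prod
      Measure.AbsolutelyContinuous.rfl).ae_le
  simp only [withDensity_apply _ hS, withDensity_apply _ MeasurableSet.univ,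
    Measure.restrict_univ, ← lintegral_prod_mul hf.aemeasurable hg.aemeasurable,
    ← lintegral_prod_mul hg.aemeasurable hf.aemeasurable]
  calc ∫⁻ p, f p.1 * g p.2 ∂(τ.restrict S).prod τ
      ≤ ∫⁻ p, K * (g p.1 * f p.2) ∂(τ.restrict S).prod τ := lintegral_mono_ae hS'
    _ = K * ∫⁻ p, g p.1 * f p.2 ∂(τ.restrict S).prod τ :=
        lintegral_const_mul K ((hg.comp measurable_fst).mul (hf.comp measurable_snd))

theorem ae_le_const_mul_of_withDensity_le [SigmaFinite τ] (hf : Measurable f)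
    (hg : Measurable g) {L : ℝ≥0∞}
    (h : ∀ S, MeasurableSet S → τ.withDensity f S ≤ L * τ.withDensity g S) :
    ∀ᵐ t ∂τ, f t ≤ L * g t :=
  ae_le_of_forall_setLIntegral_le_of_sigmaFinite hf fun S hS _ => by
    rw [lintegral_const_mul L hg, ← withDensity_apply _ hS, ← withDensity_apply _ hS]
    exact h S hS

theorem dMult_withDensity_le_of_densityRatioMetric_le [SFinite τ] (hf : Measurable f)
    (hg : Measurable g) [IsProbabilityMeasure (τ.withDensity f)]
    [IsProbabilityMeasure (τ.withDensity g)] {D : ℝ} (hD : 0 ≤ D)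
    (h : densityRatioMetric f g τ ≤ ENNReal.ofReal D) :
    dMult (τ.withDensity f) (τ.withDensity g) ≤ ENNReal.ofReal D := by
  have hae := (densityRatioMetric_le_ofReal_iff hD).1 h
  refine (dMult_le_ofReal_iff hD).2 fun S hS => ⟨?_, ?_⟩
  · simpa using withDensity_mul_withDensity_le_of_ae_prod_le hf hg (hae.mono fun _ => And.left) hS
  · simpa using withDensity_mul_withDensity_le_of_ae_prod_le hg hf (hae.mono fun _ => And.right) hS

theorem densityRatioMetric_le_of_dMult_withDensity_le [SigmaFinite τ] (hf : Measurable f)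
    (hg : Measurable g) {D : ℝ} (hD : 0 ≤ D)
    (h : dMult (τ.withDensity f) (τ.withDensity g) ≤ ENNReal.ofReal D) :
    densityRatioMetric f g τ ≤ ENNReal.ofReal (2 * D) := by
  have hset := (dMult_le_ofReal_iff hD).1 h
  have hfg := ae_le_const_mul_of_withDensity_le hf hg fun S hS => (hset S hS).1
  have hgf := ae_le_const_mul_of_withDensity_le hg hf fun S hS => (hset S hS).2
  set K := ENNReal.ofReal (Real.exp D)
  have hK : ENNReal.ofReal (Real.exp (2 * D)) = K * K := by
    rw [two_mul, Real.exp_add, ofReal_mul (Real.exp_pos D).le]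
  rw [densityRatioMetric_le_ofReal_iff (by positivity), hK]
  filter_upwards [Measure.quasiMeasurePreserving_fst.ae (hfg.and hgf),
    Measure.quasiMeasurePreserving_snd.ae (hfg.and hgf)] with p ⟨hf₁, hg₁⟩ ⟨hf₂, hg₂⟩
  constructor
  · calc f p.1 * g p.2 ≤ K * g p.1 * (K * f p.2) := mul_le_mul' hf₁ hg₂
      _ = K * K * (g p.1 * f p.2) := by ring
  · calc g p.1 * f p.2 ≤ K * f p.1 * (K * g p.2) := mul_le_mul' hg₁ hf₂
      _ = K * K * (f p.1 * g p.2) := by ring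

end withDensity

theorem stmt16_general {T : Type*} [MeasurableSpace T] (P Q : Measure T)
    [IsProbabilityMeasure P] [IsProbabilityMeasure Q]
    (τ : Measure T) [SigmaFinite τ] (f g : T → ℝ≥0∞)
    (hf : Measurable f) (hg : Measurable g)
    (hP : P = τ.withDensity f) (hQ : Q = τ.withDensity g) :
    dMult P Q ≤ densityRatioMetric f g τ ∧
      densityRatioMetric f g τ ≤ 2 * dMult P Q := by
  subst hP hQ
  constructor
  · simpa using ENNReal.le_ofReal_mul_of_forall one_pos fun D hD h => by
      simpa using dMult_withDensity_le_of_densityRatioMetric_le hf hg hD h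
  · simpa using ENNReal.le_ofReal_mul_of_forall two_pos fun D hD h =>
      densityRatioMetric_le_of_dMult_withDensity_le hf hg hD h

/-- Strong equivalence of the multiplicative distance and the density ratio
metric: `d_Mult(P,Q) ≤ δ(P,Q) ≤ 2 d_Mult(P,Q)` for mutually absolutely continuous
probability measures with bounded density ratio. -/
theorem stmt16 {T : Type*} [MeasurableSpace T] (P Q : Measure T)
    [IsProbabilityMeasure P] [IsProbabilityMeasure Q]
    (τ : Measure T) [SigmaFinite τ] (f g : T → ℝ≥0∞)
    (hf : Measurable f) (hg : Measurable g)
    (hP : P = τ.withDensity f) (hQ : Q = τ.withDensity g)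
    (hPQ : P ≪ Q) (hQP : Q ≪ P)
    (hbdd : densityRatioMetric f g τ ≠ ⊤) :
    dMult P Q ≤ densityRatioMetric f g τ ∧
      densityRatioMetric f g τ ≤ 2 * dMult P Q :=
  stmt16_general P Q τ f g hf hg hP hQ
end
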